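/- arXiv:1304.6956 — 3 statements merged into one kernel-verified Lean document; each statement's English description precedes it below -/
import Mathlib

section
/- Let G be an upper semicontinuous decomposition of ℝⁿ into compact convex sets, with quotient map π : ℝⁿ → ℝⁿ/G. Then every continuous map f : D² → ℝⁿ/G can be approximately lifted: the set { π ∘ F : F ∈ C(D², ℝⁿ) } is dense in C(D², ℝⁿ/G) with the compact-open topology. -/
open Set Metric

/-- For a closed quotient map, the set of classes contained in an open set is open. -/
lemma usat_aux {E Q : Type*} [TopologicalSpace E] [TopologicalSpace Q]
    {π : E → Q} (hclosed : IsClosedMap π) {O : Set E} (hO : IsOpen O) :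
    IsOpen {q : Q | π ⁻¹' {q} ⊆ O} := by
  have h : {q : Q | π ⁻¹' {q} ⊆ O} = (π '' Oᶜ)ᶜ := by
    ext q
    simp only [mem_setOf_eq, mem_compl_iff, mem_image, not_exists]
    constructor
    · intro h y hc
      exact hc.1 (h hc.2)
    · intro h y hy
      by_contra hyO
      exact h y ⟨hyO, hy⟩
  rw [h]
  exact (hclosed _ hO.isClosed_compl).isOpen_compl

lemma key_lift {X : Type*} [MetricSpace X] [CompactSpace X]
    {n : ℕ} (S : Setoid (EuclideanSpace ℝ (Fin n)))
    (hconvex : ∀ x, Convex ℝ {y | S x y})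
    (hproper : IsProperMap (Quotient.mk S))
    (g : C(X, Quotient S)) {ι : Type*} [Finite ι]
    (K : ι → Set X) (hK : ∀ i, IsCompact (K i))
    (U : ι → Set (Quotient S)) (hU : ∀ i, IsOpen (U i))
    (hg : ∀ i, MapsTo g (K i) (U i)) :
    ∃ F : C(X, EuclideanSpace ℝ (Fin n)),
      ∀ i, MapsTo (fun y => Quotient.mk S (F y)) (K i) (U i) := by
  have hπcont : Continuous (Quotient.mk S) := continuous_quotient_mk'
  have hclosed : IsClosedMap (Quotient.mk S) := hproper.isClosedMap
  -- fibers
  have hfib_eq : ∀ q : Quotient S,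
      Quotient.mk S ⁻¹' {q} = {y | S (Quotient.out q) y} := by
    intro q
    ext y
    simp only [mem_preimage, mem_singleton_iff, mem_setOf_eq]
    constructor
    · intro h
      exact Quotient.exact (show Quotient.mk S q.out = Quotient.mk S y by
        rw [Quotient.out_eq, ← h])
    · intro h
      have h2 : Quotient.mk S (Quotient.out q) = Quotient.mk S y := Quotient.sound h
      rw [← h2, Quotient.out_eq]
  have hfib_cpt : ∀ q : Quotient S, IsCompact (Quotient.mk S ⁻¹' {q}) :=
    fun _ => hproper.isCompact_preimage isCompact_singleton
  have hfib_conv : ∀ q : Quotient S, Convex ℝ (Quotient.mk S ⁻¹' {q}) := by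
    intro q; rw [hfib_eq]; exact hconvex _
  rcases isEmpty_or_nonempty X with hX | hX
  · refine ⟨⟨fun _ => 0, continuous_of_const fun a => (IsEmpty.false a).elim⟩, ?_⟩
    exact fun i y _ => (IsEmpty.false y).elim
  -- Step A: convex open neighborhoods of fibers
  have hOx : ∀ x : X, ∃ O : Set (EuclideanSpace ℝ (Fin n)), IsOpen O ∧ Convex ℝ O ∧
      Quotient.mk S ⁻¹' {g x} ⊆ O ∧
      ∀ i, x ∈ K i → O ⊆ Quotient.mk S ⁻¹' (U i) := by
    intro x
    have hVopen : IsOpen (⋂ i, ⋂ (_ : x ∈ K i), Quotient.mk S ⁻¹' (U i)) :=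
      isOpen_iInter_of_finite fun i => isOpen_iInter_of_finite fun _ =>
        (hU i).preimage hπcont
    have hCV : Quotient.mk S ⁻¹' {g x} ⊆ ⋂ i, ⋂ (_ : x ∈ K i),
        Quotient.mk S ⁻¹' (U i) := by
      intro y hy
      simp only [mem_iInter]
      intro i hi
      simp only [mem_preimage, mem_singleton_iff] at hy
      simp only [mem_preimage, hy]
      exact hg i hi
    obtain ⟨ε, hε, hthick⟩ :=
      (hfib_cpt (g x)).exists_thickening_subset_open hVopen hCV
    refine ⟨thickening ε (Quotient.mk S ⁻¹' {g x}), isOpen_thickening,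
      (hfib_conv (g x)).thickening ε, self_subset_thickening hε _, ?_⟩
    intro i hi
    exact hthick.trans (iInter_subset_of_subset i (iInter_subset _ hi))
  choose O hOopen hOconv hOsub hOV using hOx
  -- Step B: radii
  have hrx : ∀ x : X, ∃ r : ℝ, 0 < r ∧
      (∀ y, dist y x < 2 * r → Quotient.mk S ⁻¹' {g y} ⊆ O x) ∧
      (∀ i, x ∉ K i → ∀ y, dist y x < 2 * r → y ∉ K i) := by
    intro x
    have hW : IsOpen (g ⁻¹' {q | Quotient.mk S ⁻¹' {q} ⊆ O x} ∩
        ⋂ i, ⋂ (_ : x ∉ K i), (K i)ᶜ) := by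
      refine ((usat_aux hclosed (hOopen x)).preimage g.continuous).inter ?_
      exact isOpen_iInter_of_finite fun i => isOpen_iInter_of_finite fun _ =>
        (hK i).isClosed.isOpen_compl
    have hxW : x ∈ g ⁻¹' {q | Quotient.mk S ⁻¹' {q} ⊆ O x} ∩
        ⋂ i, ⋂ (_ : x ∉ K i), (K i)ᶜ := by
      refine ⟨hOsub x, ?_⟩
      simp only [mem_iInter, mem_compl_iff]
      exact fun i hi => hi
    obtain ⟨δ, hδ, hball⟩ := Metric.isOpen_iff.1 hW x hxW
    refine ⟨δ / 2, by linarith, ?_, ?_⟩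
    · intro y hy
      exact (hball (show y ∈ ball x δ by rw [mem_ball]; linarith)).1
    · intro i hi y hy
      have h2 := (hball (show y ∈ ball x δ by rw [mem_ball]; linarith)).2
      simp only [mem_iInter, mem_compl_iff] at h2
      exact h2 i hi
  choose r hr hrO hrK using hrx
  -- finite subcover
  obtain ⟨t, ht⟩ := isCompact_univ.elim_finite_subcover (fun x : X => ball x (r x))
    (fun _ => isOpen_ball) (fun y _ => mem_iUnion.2 ⟨y, mem_ball_self (hr y)⟩)
  -- points in fibers
  have hp : ∀ x : X, Quotient.mk S (Quotient.out (g x)) = g x :=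
    fun x => Quotient.out_eq (g x)
  set p : X → EuclideanSpace ℝ (Fin n) := fun x => Quotient.out (g x) with hp_def
  -- weights
  set d : X → X → ℝ := fun c y => max (r c - dist y c) 0 with hd_def
  have hd_nonneg : ∀ c y, 0 ≤ d c y := fun c y => le_max_right _ _
  have hd_pos_iff : ∀ c y, 0 < d c y ↔ dist y c < r c := by
    intro c y
    simp only [hd_def, lt_max_iff, lt_irrefl, or_false]
    constructor <;> intro h <;> linarith
  have hd_cont : ∀ c, Continuous fun y => d c y := fun c =>
    (continuous_const.sub (continuous_id.dist continuous_const)).max continuous_const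
  set den : X → ℝ := fun y => ∑ c ∈ t, d c y with hden_def
  have hden_pos : ∀ y, 0 < den y := by
    intro y
    obtain ⟨c, hct, hcy⟩ := mem_iUnion₂.1 (ht (mem_univ y))
    exact Finset.sum_pos' (fun c _ => hd_nonneg c y)
      ⟨c, hct, (hd_pos_iff c y).2 (mem_ball.1 hcy)⟩
  have hden_cont : Continuous den := continuous_finset_sum _ fun c _ => hd_cont c
  set F : X → EuclideanSpace ℝ (Fin n) :=
    fun y => (den y)⁻¹ • ∑ c ∈ t, d c y • p c with hF_def
  have hFcont : Continuous F := by
    refine Continuous.smul (hden_cont.inv₀ fun y => (hden_pos y).ne') ?_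
    exact continuous_finset_sum _ fun c _ => (hd_cont c).smul continuous_const
  refine ⟨⟨F, hFcont⟩, ?_⟩
  intro i y hy
  simp only [ContinuousMap.coe_mk]
  classical
  set J : Finset X := t.filter (fun c => 0 < d c y) with hJ_def
  have hJne : J.Nonempty := by
    obtain ⟨c, hct, hcy⟩ := mem_iUnion₂.1 (ht (mem_univ y))
    exact ⟨c, Finset.mem_filter.2 ⟨hct, (hd_pos_iff c y).2 (mem_ball.1 hcy)⟩⟩
  obtain ⟨c', hc'J, hmax⟩ := J.exists_max_image r hJne
  have hc'pos : 0 < d c' y := (Finset.mem_filter.1 hc'J).2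
  have hyc' : dist y c' < r c' := (hd_pos_iff c' y).1 hc'pos
  have hpO : ∀ c ∈ J, p c ∈ O c' := by
    intro c hcJ
    have hyc : dist y c < r c := (hd_pos_iff c y).1 (Finset.mem_filter.1 hcJ).2
    have hcc' : dist c c' < 2 * r c' := by
      have h1 : dist c c' ≤ dist c y + dist y c' := dist_triangle c y c'
      have h2 : dist c y = dist y c := dist_comm c y
      have h3 : r c ≤ r c' := hmax c hcJ
      linarith
    exact hrO c' c hcc' (by rw [mem_preimage, mem_singleton_iff, hp c])
  have hFmem : F y ∈ O c' := by
    have h1 : ∑ c ∈ J, ((den y)⁻¹ * d c y) • p c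
        = ∑ c ∈ t, ((den y)⁻¹ * d c y) • p c := by
      refine Finset.sum_filter_of_ne ?_
      intro c _ hne
      by_contra hle
      have hz : d c y = 0 := le_antisymm (not_lt.1 hle) (hd_nonneg c y)
      rw [hz] at hne
      simp at hne
    have hrw : F y = ∑ c ∈ J, ((den y)⁻¹ * d c y) • p c := by
      rw [h1]
      show (den y)⁻¹ • ∑ c ∈ t, d c y • p c = _
      rw [Finset.smul_sum]
      simp_rw [smul_smul]
    rw [hrw]
    refine (hOconv c').sum_mem (fun c _ => ?_) ?_ (fun c hcJ => hpO c hcJ)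
    · exact mul_nonneg (inv_nonneg.2 (hden_pos y).le) (hd_nonneg c y)
    · have h2 : ∑ c ∈ J, d c y = den y := by
        show _ = ∑ c ∈ t, d c y
        refine Finset.sum_filter_of_ne ?_
        intro c _ hne
        exact lt_of_le_of_ne (hd_nonneg c y) (Ne.symm hne)
      rw [← Finset.mul_sum, h2]
      exact inv_mul_cancel₀ (hden_pos y).ne'
  have hc'K : c' ∈ K i := by
    by_contra hc'
    exact hrK c' i hc' y (by linarith [hr c']) hy
  exact hOV c' i hc'K hFmem

/-- If `G` is an upper semicontinuous decomposition of `ℝⁿ` into compact convex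
sets with quotient map `π`, then every map `f : D² → ℝⁿ/G` can be approximately lifted:
`{ π ∘ F : F ∈ C(D², ℝⁿ) }` is dense in `C(D², ℝⁿ/G)` (compact-open topology). -/
theorem convex_decomposition_approximate_lifting_disk
    (n : ℕ) (S : Setoid (EuclideanSpace ℝ (Fin n)))
    (hcompact : ∀ x, IsCompact {y | S x y})
    (hconvex : ∀ x, Convex ℝ {y | S x y})
    (hproper : IsProperMap (Quotient.mk S)) :
    Dense {g : C((Metric.closedBall (0 : EuclideanSpace ℝ (Fin 2)) 1 :
        Set (EuclideanSpace ℝ (Fin 2))), Quotient S) |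
      ∃ F : C((Metric.closedBall (0 : EuclideanSpace ℝ (Fin 2)) 1 :
          Set (EuclideanSpace ℝ (Fin 2))), EuclideanSpace ℝ (Fin n)),
        g = ContinuousMap.comp ⟨Quotient.mk S, continuous_quotient_mk'⟩ F} := by
  haveI : CompactSpace (Metric.closedBall (0 : EuclideanSpace ℝ (Fin 2)) 1 :
      Set (EuclideanSpace ℝ (Fin 2))) :=
    isCompact_iff_compactSpace.mp (isCompact_closedBall _ _)
  rw [(TopologicalSpace.isTopologicalBasis_of_subbasis
    (ContinuousMap.compactOpen_eq (X := (Metric.closedBall (0 : EuclideanSpace ℝ (Fin 2)) 1 : Set (EuclideanSpace ℝ (Fin 2)))) (Y := Quotient S))).dense_iff]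
  rintro o ⟨T, ⟨hTfin, hTsub⟩, rfl⟩ ⟨g, hgo⟩
  haveI : Finite ↥T := hTfin.to_subtype
  have hsel : ∀ s : T, ∃ K : Set (Metric.closedBall (0 : EuclideanSpace ℝ (Fin 2)) 1 : Set (EuclideanSpace ℝ (Fin 2))), IsCompact K ∧ ∃ U : Set (Quotient S), IsOpen U ∧
      (s : Set C((Metric.closedBall (0 : EuclideanSpace ℝ (Fin 2)) 1 : Set (EuclideanSpace ℝ (Fin 2))), Quotient S)) = {f : C((Metric.closedBall (0 : EuclideanSpace ℝ (Fin 2)) 1 : Set (EuclideanSpace ℝ (Fin 2))), Quotient S) | MapsTo (⇑f) K U} := by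
    intro s
    obtain ⟨K, hKc, U, hUo, hs⟩ := hTsub s.2
    exact ⟨K, hKc, U, hUo, hs.symm⟩
  choose K hKc U hUo hs using hsel
  have hgm : ∀ s : T, MapsTo g (K s) (U s) := by
    intro s
    have h := (mem_sInter.1 hgo) s s.2
    rwa [hs s] at h
  obtain ⟨F, hF⟩ := key_lift S hconvex hproper g K hKc U hUo hgm
  refine ⟨ContinuousMap.comp ⟨Quotient.mk S, continuous_quotient_mk'⟩ F, ?_, F, rfl⟩
  rw [mem_sInter]
  intro s hsT
  have h2 : s = {f : C((Metric.closedBall (0 : EuclideanSpace ℝ (Fin 2)) 1 : Set (EuclideanSpace ℝ (Fin 2))), Quotient S) | MapsTo (⇑f) (K ⟨s, hsT⟩) (U ⟨s, hsT⟩)} := hs ⟨s, hsT⟩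
  rw [h2]
  exact fun y hy => hF ⟨s, hsT⟩ hy
end

section
/- Let G be an upper semicontinuous decomposition of ℝⁿ into compact convex sets, with quotient map π : ℝⁿ → ℝⁿ/G. Then every continuous map α : I → ℝⁿ/G can be approximately lifted: the set { π ∘ A : A ∈ C(I, ℝⁿ) } is dense in C(I, ℝⁿ/G) with the compact-open topology. -/
open Set Filter Topology Metric

/-!
Since `π` is proper, every neighbourhood of a fibre `π⁻¹{y}` contains a thickening `W` of it,
convex when the fibre is, which in turn contains a saturated neighbourhood `π⁻¹ O` of the fibre.
A compact-open neighbourhood of `g : C(X, Y)` contains every map whose graph lies in a suitable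
neighbourhood `N` of the graph of `g`. Pick such `W, O` for product boxes in `N` around the points
of the graph of `g`, and a Lebesgue number `δ` for the cover of `X` by the sets `g⁻¹ O`. Assigning
to `x` the convex set `W` of a box whose base contains the `δ`-ball at `x` gives a convex-valued
field in which any lift of `g x` is a selection near `x`; a partition of unity glues these
locally constant selections into a continuous `A`, and the graph of `π ∘ A` lies in `N`.
-/

namespace ContinuousMap

variable {X Y : Type*} [TopologicalSpace X] [T2Space X] [TopologicalSpace Y]

theorem exists_nhdsSet_graph_subset {g : C(X, Y)} {𝒰 : Set C(X, Y)} (h𝒰 : 𝒰 ∈ 𝓝 g) :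
    ∃ N ∈ 𝓝ˢ (range fun x ↦ (x, g x)), {f : C(X, Y) | ∀ x, (x, f x) ∈ N} ⊆ 𝒰 := by
  suffices (𝓝ˢ (range fun x ↦ (x, g x))).smallSets.comap
      (fun f : C(X, Y) ↦ range fun x ↦ (x, f x)) ≤ 𝓝 g by
    obtain ⟨T, hT, hT𝒰⟩ := mem_comap.1 (this h𝒰)
    obtain ⟨N, hN, hNT⟩ := (hasBasis_smallSets _).mem_iff.1 hT
    exact ⟨N, hN, fun f hf ↦ hT𝒰 (hNT (range_subset_iff.2 hf))⟩
  rw [nhds_compactOpen]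
  refine le_iInf₂ fun K hK ↦ le_iInf₂ fun U hU ↦ le_iInf fun hgKU ↦ le_principal_iff.2 ?_
  have hN : IsOpen {p : X × Y | p.1 ∈ K → p.2 ∈ U} := by
    simp only [imp_iff_not_or, ofPred_or]
    exact (hK.isClosed.preimage continuous_fst).isOpen_compl.union (hU.preimage continuous_snd)
  refine mem_comap.2 ⟨_, (hasBasis_smallSets _).mem_iff.2 ⟨_, hN.mem_nhdsSet.2 ?_, subset_rfl⟩, ?_⟩
  · exact range_subset_iff.2 fun x hx ↦ hgKU hx
  · exact fun f hf x hx ↦ range_subset_iff.1 hf x hx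

theorem dense_of_exists_graph_mem {s : Set C(X, Y)}
    (h : ∀ (g : C(X, Y)) (N : Set (X × Y)), (∀ x, N ∈ 𝓝 (x, g x)) → ∃ f ∈ s, ∀ x, (x, f x) ∈ N) :
    Dense s := by
  refine fun g ↦ mem_closure_iff_nhds.2 fun 𝒰 h𝒰 ↦ ?_
  obtain ⟨N, hN, hN𝒰⟩ := exists_nhdsSet_graph_subset h𝒰
  obtain ⟨f, hfs, hfN⟩ := h g N fun x ↦ mem_nhdsSet_iff_forall.1 hN _ (mem_range_self x)
  exact ⟨f, hN𝒰 hfN, hfs⟩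

end ContinuousMap

namespace IsProperMap

variable {E Y : Type*} [NormedAddCommGroup E] [NormedSpace ℝ E] [TopologicalSpace Y] {π : E → Y}

theorem exists_convex_between_preimages (hπ : IsProperMap π) {y : Y}
    (hconv : Convex ℝ (π ⁻¹' {y})) {V : Set Y} (hV : V ∈ 𝓝 y) :
    ∃ W, Convex ℝ W ∧ ∃ O ∈ 𝓝 y, π ⁻¹' O ⊆ W ∧ W ⊆ π ⁻¹' V := by
  have hfiber : comap π (𝓝 y) = 𝓝ˢ (π ⁻¹' {y}) :=
    hπ.isClosedMap.comap_nhds_eq hπ.continuous y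
  obtain ⟨r, hr, hrV⟩ :=
    (hasBasis_nhdsSet_thickening (hπ.isCompact_preimage isCompact_singleton)).mem_iff.1
      (hfiber ▸ preimage_mem_comap hV)
  obtain ⟨O, hO, hOr⟩ := mem_comap.1 (hfiber ▸ thickening_mem_nhdsSet (π ⁻¹' {y}) hr)
  exact ⟨_, hconv.thickening r, O, hO, hOr, hrV⟩

theorem exists_continuous_lift_graph_mem {X : Type*} [PseudoEMetricSpace X] [CompactSpace X]
    (hπ : IsProperMap π) (hsurj : Function.Surjective π) (hconv : ∀ y, Convex ℝ (π ⁻¹' {y}))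
    (g : C(X, Y)) {N : Set (X × Y)} (hN : ∀ x, N ∈ 𝓝 (x, g x)) :
    ∃ A : C(X, E), ∀ x, (x, π (A x)) ∈ N := by
  choose P hP V hV hPV using fun x ↦ mem_nhds_prod_iff.1 (hN x)
  choose W hWconv O hO hOW hWV using
    fun x ↦ exists_convex_between_preimages hπ (hconv (g x)) (hV x)
  obtain ⟨δ, hδ, hball⟩ := lebesgue_number_lemma_of_emetric_nhds (c := fun x ↦ P x ∩ g ⁻¹' O x)
    isCompact_univ fun x _ ↦ inter_mem (hP x) (g.continuous.continuousAt (hO x))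
  choose c hc using fun x ↦ hball x (mem_univ x)
  -- near `x`, every `W (c x')` contains a lift of `g x`, since `x` is in the Lebesgue ball at `x'`
  have hlocal : ∀ x, ∀ᶠ x' in 𝓝 x, Function.surjInv hsurj (g x) ∈ W (c x') := fun x ↦ by
    filter_upwards [eball_mem_nhds x hδ] with x' hx'
    have hx : x ∈ P (c x') ∩ g ⁻¹' O (c x') := hc x' (mem_eball_comm.1 hx')
    exact hOW (c x') (by simpa only [mem_preimage, Function.surjInv_eq] using hx.2)
  obtain ⟨A, hA⟩ := exists_continuous_forall_mem_convex_of_local_const (fun x ↦ hWconv (c x))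
    fun x ↦ ⟨_, hlocal x⟩
  exact ⟨A, fun x ↦ hPV (c x) ⟨(hc x (mem_eball_self hδ)).1, hWV (c x) (hA x)⟩⟩

end IsProperMap

theorem convex_decomposition_approximate_lifting_arc_general
    (n : ℕ) (S : Setoid (EuclideanSpace ℝ (Fin n)))
    (hconvex : ∀ x, Convex ℝ {y | S x y})
    (hproper : IsProperMap (Quotient.mk S)) :
    Dense {g : C(unitInterval, Quotient S) |
      ∃ A : C(unitInterval, EuclideanSpace ℝ (Fin n)),
        g = ContinuousMap.comp ⟨Quotient.mk S, continuous_quotient_mk'⟩ A} := by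
  have hfiber : ∀ q : Quotient S, Convex ℝ (Quotient.mk S ⁻¹' {q}) := by
    rintro ⟨x⟩
    convert hconvex x using 1
    ext y
    exact Quotient.eq.trans ⟨S.symm, S.symm⟩
  refine ContinuousMap.dense_of_exists_graph_mem fun g N hN ↦ ?_
  obtain ⟨A, hA⟩ := hproper.exists_continuous_lift_graph_mem Quotient.mk_surjective hfiber g hN
  exact ⟨_, ⟨A, rfl⟩, hA⟩

/-- If `G` is an upper semicontinuous decomposition of `ℝⁿ` into compact convex
sets with quotient map `π`, then every map `α : I → ℝⁿ/G` can be approximately lifted: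
`{ π ∘ A : A ∈ C(I, ℝⁿ) }` is dense in `C(I, ℝⁿ/G)` (compact-open topology). -/
theorem convex_decomposition_approximate_lifting_arc
    (n : ℕ) (S : Setoid (EuclideanSpace ℝ (Fin n)))
    (hcompact : ∀ x, IsCompact {y | S x y})
    (hconvex : ∀ x, Convex ℝ {y | S x y})
    (hproper : IsProperMap (Quotient.mk S)) :
    Dense {g : C(unitInterval, Quotient S) |
      ∃ A : C(unitInterval, EuclideanSpace ℝ (Fin n)),
        g = ContinuousMap.comp ⟨Quotient.mk S, continuous_quotient_mk'⟩ A} :=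
  convex_decomposition_approximate_lifting_arc_general n S hconvex hproper
end

section
/- Let X be a topological space, let S be an equivalence relation on X whose quotient map π : X → X/S is proper, and let C ⊆ X/S be a closed set. Define a new equivalence relation S_C on X by: x ~ y if and only if x = y, or (π(x) = π(y) and π(x) ∈ C). Then the quotient map ω : X → X/S_C is also proper. (That is, the decomposition induced over a closed set of a usc decomposition is again usc.) -/
/-- Let `X` be a topological space, `S` an equivalence relation on `X` with
proper quotient map `π : X → X/S`, and `C ⊆ X/S` closed. If `S_C` is the equivalence
relation with `x ~ y` iff `x = y`, or (`π x = π y` and `π x ∈ C`), then the quotient map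
`ω : X → X/S_C` is also proper (the decomposition induced over a closed set is usc). -/
theorem induced_decomposition_over_closed_set_proper
    {X : Type*} [TopologicalSpace X] (S : Setoid X)
    (hproper : IsProperMap (Quotient.mk S))
    (C : Set (Quotient S)) (hC : IsClosed C)
    (SC : Setoid X)
    (hSC : ∀ x y : X, SC x y ↔
      x = y ∨ (Quotient.mk S x = Quotient.mk S y ∧ Quotient.mk S x ∈ C)) :
    IsProperMap (Quotient.mk SC) := by
  -- the map g : X/SC → X/S
  have hle : ∀ a b : X, SC a b → Quotient.mk S a = Quotient.mk S b := by
    intro a b h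
    rcases (hSC a b).1 h with rfl | ⟨h1, _⟩
    · rfl
    · exact h1
  set g : Quotient SC → Quotient S := Quotient.lift (Quotient.mk S) hle with hg
  have hgcont : Continuous g := (hproper.continuous).quotient_lift hle
  rw [isProperMap_iff_ultrafilter]
  refine ⟨continuous_quotient_mk', ?_⟩
  intro 𝒰 y hy
  obtain ⟨z, rfl⟩ := Quotient.exists_rep y
  by_cases hzC : Quotient.mk S z ∈ C
  · -- fiber over y is the S-class of z; use properness of π
    have hπ : Filter.Tendsto (Quotient.mk S) 𝒰 (nhds (Quotient.mk S z)) := by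
      have : Filter.Tendsto (g ∘ Quotient.mk SC) 𝒰 (nhds (g (Quotient.mk SC z))) :=
        (hgcont.tendsto _).comp hy
      exact this
    obtain ⟨x, hx1, hx2⟩ := hproper.ultrafilter_le_nhds_of_tendsto hπ
    refine ⟨x, ?_, hx2⟩
    exact Quotient.sound ((hSC x z).2 (Or.inr ⟨hx1, hx1 ▸ hzC⟩))
  · -- {z} is its own class; show 𝒰 → z
    refine ⟨z, rfl, ?_⟩
    intro V hV
    obtain ⟨V', hV'sub, hV'open, hzV'⟩ := mem_nhds_iff.1 hV
    set W : Set X := V' ∩ (Quotient.mk S) ⁻¹' Cᶜ with hW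
    have hWopen : IsOpen W := hV'open.inter (hC.isOpen_compl.preimage hproper.continuous)
    have hzW : z ∈ W := ⟨hzV', hzC⟩
    have hsat : (Quotient.mk SC) ⁻¹' ((Quotient.mk SC) '' W) = W := by
      apply Set.Subset.antisymm
      · rintro x ⟨w, hw, hxw⟩
        rcases (hSC x w).1 (Quotient.exact hxw.symm) with rfl | ⟨h1, h2⟩
        · exact hw
        · exact absurd (h1 ▸ h2) hw.2
      · exact Set.subset_preimage_image _ _
    have hopen : IsOpen ((Quotient.mk SC) '' W) := by
      rw [← isQuotientMap_quotient_mk'.isOpen_preimage,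
        show (Quotient.mk' : X → Quotient SC) = Quotient.mk SC from rfl, hsat]
      exact hWopen
    have hmem : (Quotient.mk SC) '' W ∈ nhds (Quotient.mk SC z) :=
      hopen.mem_nhds ⟨z, hzW, rfl⟩
    have hWU := hy hmem
    rw [Filter.mem_map, hsat] at hWU
    exact Filter.mem_of_superset hWU (Set.inter_subset_left.trans hV'sub)
end
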